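/- arXiv:2604.06362 — 2 statements merged into one kernel-verified Lean document; each statement's English description precedes it below -/
import Mathlib

section
/- Suppose h is twice continuously differentiable in x with |∂_x h(x,t)| ≤ M for all (x,t). Then ∂_x φ₁ + ∂_y φ₂ = 0 on the fluid region, and there exists a constant C > 0, depending only on β_s, β_b and M, such that for all t ∈ [0,T], x ∈ [0,L] and 0 ≤ y ≤ h(x,t) one has |∂_x φ₁(x,y,t)| ≤ C, |∂_y φ₁(x,y,t)| ≤ C, |∂_y φ₂(x,y,t)| ≤ C, and |∂_x φ₂(x,y,t)| ≤ C·(1 + |∂_{xx} h(x,t)|). -/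
noncomputable def lamS (βs s : ℝ) : ℝ := s / βs
noncomputable def lamB (βb s : ℝ) : ℝ := s / βb
noncomputable def Dcoef (βs βb s : ℝ) : ℝ :=
  lamS βs s * lamB βb s + 4 * (lamS βs s + lamB βb s) + 12
noncomputable def aCoef (βs βb s : ℝ) : ℝ :=
  -2 * (lamS βs s + lamB βb s + lamS βs s * lamB βb s) / Dcoef βs βb s
noncomputable def bCoef (βs βb s : ℝ) : ℝ :=
  3 * lamB βb s * (lamS βs s + 2) / Dcoef βs βb s
noncomputable def cCoef (βs βb s : ℝ) : ℝ :=
  6 * (lamS βs s + 2) / Dcoef βs βb s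
noncomputable def Phi (βs βb s ξ : ℝ) : ℝ :=
  aCoef βs βb s * ξ ^ 3 + bCoef βs βb s * ξ ^ 2 + cCoef βs βb s * ξ
noncomputable def psiF (βs βb : ℝ) (h : ℝ → ℝ → ℝ) (x y t : ℝ) : ℝ :=
  h x t * Phi βs βb (h x t) (y / h x t)
noncomputable def phi1 (βs βb : ℝ) (h : ℝ → ℝ → ℝ) (x y t : ℝ) : ℝ :=
  -deriv (fun y' => psiF βs βb h x y' t) y
noncomputable def phi2 (βs βb : ℝ) (h : ℝ → ℝ → ℝ) (x y t : ℝ) : ℝ :=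
  deriv (fun x' => psiF βs βb h x' y t) x

/-!
For h > 0 the stream function is a cubic in y whose coefficients depend on the depth s = h:
ψ = A(h) y³ + B(h) y² + c(h) y with A(s) = a(s)/s² and B(s) = b(s)/s. Both a(s)/s and B are
rational with denominator D ≥ 12, hence smooth on a neighbourhood of [0, ∞); only A itself is
singular at s = 0. Differentiating, φ₁ = -∂_yψ and φ₂ = h_x ∂_sψ are again polynomials in y, and
∂_xφ₁ = -∂_yφ₂ because both are h_x times the mixed derivative ∂_s∂_yψ. In the gradient of φ the
k-th derivative of A = O(s^(-k-1)) only ever meets a power y^m with m ≥ k + 1, so on the layer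
0 ≤ y ≤ s ≤ M every coefficient is bounded by continuity on the compact interval [0, M]; h_xx
enters ∂_xφ₂ only linearly.
-/

open Set Filter Topology Asymptotics Function

noncomputable def cubicStream (p₃ p₂ p₁ : ℝ → ℝ) (s y : ℝ) : ℝ :=
  p₃ s * y ^ 3 + p₂ s * y ^ 2 + p₁ s * y

noncomputable def cubicStreamDy (p₃ p₂ p₁ : ℝ → ℝ) (s y : ℝ) : ℝ :=
  3 * p₃ s * y ^ 2 + 2 * p₂ s * y + p₁ s

section CubicStream

variable {p₃ p₂ p₁ : ℝ → ℝ}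

theorem hasDerivAt_cubicStream_snd (p₃ p₂ p₁ : ℝ → ℝ) (s y : ℝ) :
    HasDerivAt (cubicStream p₃ p₂ p₁ s) (cubicStreamDy p₃ p₂ p₁ s y) y :=
  ((((hasDerivAt_pow 3 y).const_mul (p₃ s)).add ((hasDerivAt_pow 2 y).const_mul (p₂ s))).add
    ((hasDerivAt_id' y).const_mul (p₁ s))).congr_deriv <| by
      simp only [cubicStreamDy, Nat.cast_ofNat, Nat.add_one_sub_one, pow_one]
      ring

theorem hasDerivAt_cubicStreamDy_snd (p₃ p₂ p₁ : ℝ → ℝ) (s y : ℝ) :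
    HasDerivAt (cubicStreamDy p₃ p₂ p₁ s) (6 * p₃ s * y + 2 * p₂ s) y :=
  ((((hasDerivAt_pow 2 y).const_mul (3 * p₃ s)).add
    ((hasDerivAt_id' y).const_mul (2 * p₂ s))).add_const (p₁ s)).congr_deriv <| by
      simp only [Nat.cast_ofNat, Nat.add_one_sub_one, pow_one]
      ring

theorem hasDerivAt_cubicStream_fst {s : ℝ} (h₃ : DifferentiableAt ℝ p₃ s)
    (h₂ : DifferentiableAt ℝ p₂ s) (h₁ : DifferentiableAt ℝ p₁ s) (y : ℝ) :
    HasDerivAt (fun s ↦ cubicStream p₃ p₂ p₁ s y)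
      (cubicStream (deriv p₃) (deriv p₂) (deriv p₁) s y) s :=
  ((h₃.hasDerivAt.mul_const _).add (h₂.hasDerivAt.mul_const _)).add (h₁.hasDerivAt.mul_const _)

theorem hasDerivAt_cubicStreamDy_fst {s : ℝ} (h₃ : DifferentiableAt ℝ p₃ s)
    (h₂ : DifferentiableAt ℝ p₂ s) (h₁ : DifferentiableAt ℝ p₁ s) (y : ℝ) :
    HasDerivAt (fun s ↦ cubicStreamDy p₃ p₂ p₁ s y)
      (cubicStreamDy (deriv p₃) (deriv p₂) (deriv p₁) s y) s :=
  (((h₃.hasDerivAt.const_mul 3).mul_const (y ^ 2)).add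
    ((h₂.hasDerivAt.const_mul 2).mul_const y)).add h₁.hasDerivAt

end CubicStream

section ContDiffOn

variable {f : ℝ → ℝ} {U : Set ℝ}

theorem ContDiffOn.differentiableAt_deriv {s : ℝ} (hf : ContDiffOn ℝ 2 f U) (hU : IsOpen U)
    (hs : s ∈ U) : DifferentiableAt ℝ (deriv f) s :=
  ((hf.deriv_of_isOpen hU (by norm_num : (1 : WithTop ℕ∞) + 1 ≤ 2)).differentiableOn
    one_ne_zero).differentiableAt (hU.mem_nhds hs)

theorem ContDiffOn.continuousOn_deriv_deriv (hf : ContDiffOn ℝ 2 f U) (hU : IsOpen U) :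
    ContinuousOn (deriv (deriv f)) U :=
  (hf.deriv_of_isOpen hU (by norm_num : (1 : WithTop ℕ∞) + 1 ≤ 2)).continuousOn_deriv_of_isOpen
    hU le_rfl

end ContDiffOn

structure IsCubicStream (ψ : ℝ → ℝ → ℝ) (u p₃ p₂ p₁ : ℝ → ℝ) (V : Set ℝ) : Prop where
  isOpen : IsOpen V
  contDiff : ContDiff ℝ 2 u
  contDiffOn₃ : ContDiffOn ℝ 2 p₃ V
  contDiffOn₂ : ContDiffOn ℝ 2 p₂ V
  contDiffOn₁ : ContDiffOn ℝ 2 p₁ V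
  eq_cubicStream : ∀ x, u x ∈ V → ψ x = cubicStream p₃ p₂ p₁ (u x)

namespace IsCubicStream

variable {ψ : ℝ → ℝ → ℝ} {u p₃ p₂ p₁ : ℝ → ℝ} {V : Set ℝ} {x : ℝ}

theorem eventually_mem (hψ : IsCubicStream ψ u p₃ p₂ p₁ V) (hx : u x ∈ V) :
    ∀ᶠ x' in 𝓝 x, u x' ∈ V :=
  hψ.contDiff.continuous.continuousAt.preimage_mem_nhds (hψ.isOpen.mem_nhds hx)

theorem hasDerivAt_depth (hψ : IsCubicStream ψ u p₃ p₂ p₁ V) (x : ℝ) :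
    HasDerivAt u (deriv u x) x :=
  (hψ.contDiff.differentiable (by norm_num) x).hasDerivAt

theorem differentiableAt_coeffs (hψ : IsCubicStream ψ u p₃ p₂ p₁ V) (hx : u x ∈ V) :
    DifferentiableAt ℝ p₃ (u x) ∧ DifferentiableAt ℝ p₂ (u x) ∧ DifferentiableAt ℝ p₁ (u x) :=
  have hV := hψ.isOpen.mem_nhds hx
  ⟨(hψ.contDiffOn₃.contDiffAt hV).differentiableAt (by norm_num),
    (hψ.contDiffOn₂.contDiffAt hV).differentiableAt (by norm_num),
    (hψ.contDiffOn₁.contDiffAt hV).differentiableAt (by norm_num)⟩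

theorem differentiableAt_deriv_coeffs (hψ : IsCubicStream ψ u p₃ p₂ p₁ V) (hx : u x ∈ V) :
    DifferentiableAt ℝ (deriv p₃) (u x) ∧ DifferentiableAt ℝ (deriv p₂) (u x) ∧
      DifferentiableAt ℝ (deriv p₁) (u x) :=
  ⟨hψ.contDiffOn₃.differentiableAt_deriv hψ.isOpen hx,
    hψ.contDiffOn₂.differentiableAt_deriv hψ.isOpen hx,
    hψ.contDiffOn₁.differentiableAt_deriv hψ.isOpen hx⟩

theorem deriv_snd (hψ : IsCubicStream ψ u p₃ p₂ p₁ V) (hx : u x ∈ V) (y : ℝ) :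
    deriv (fun y' ↦ ψ x y') y = cubicStreamDy p₃ p₂ p₁ (u x) y := by
  rw [show (fun y' ↦ ψ x y') = _ from hψ.eq_cubicStream x hx]
  exact (hasDerivAt_cubicStream_snd p₃ p₂ p₁ (u x) y).deriv

theorem hasDerivAt_fst (hψ : IsCubicStream ψ u p₃ p₂ p₁ V) (hx : u x ∈ V) (y : ℝ) :
    HasDerivAt (fun x' ↦ ψ x' y)
      (cubicStream (deriv p₃) (deriv p₂) (deriv p₁) (u x) y * deriv u x) x := by
  obtain ⟨h₃, h₂, h₁⟩ := hψ.differentiableAt_coeffs hx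
  refine ((hasDerivAt_cubicStream_fst h₃ h₂ h₁ y).comp x
    (hψ.hasDerivAt_depth x)).congr_of_eventuallyEq ?_
  filter_upwards [hψ.eventually_mem hx] with x' hx'
  simp [hψ.eq_cubicStream x' hx']

theorem deriv_fst (hψ : IsCubicStream ψ u p₃ p₂ p₁ V) (hx : u x ∈ V) (y : ℝ) :
    deriv (fun x' ↦ ψ x' y) x
      = cubicStream (deriv p₃) (deriv p₂) (deriv p₁) (u x) y * deriv u x :=
  (hψ.hasDerivAt_fst hx y).deriv

theorem deriv_fst_neg_deriv_snd (hψ : IsCubicStream ψ u p₃ p₂ p₁ V) (hx : u x ∈ V) (y : ℝ) :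
    deriv (fun x' ↦ -deriv (fun y' ↦ ψ x' y') y) x
      = -(cubicStreamDy (deriv p₃) (deriv p₂) (deriv p₁) (u x) y * deriv u x) := by
  obtain ⟨h₃, h₂, h₁⟩ := hψ.differentiableAt_coeffs hx
  refine (((hasDerivAt_cubicStreamDy_fst h₃ h₂ h₁ y).comp x
    (hψ.hasDerivAt_depth x)).neg.congr_of_eventuallyEq ?_).deriv
  filter_upwards [hψ.eventually_mem hx] with x' hx'
  simp [hψ.deriv_snd hx' y]

theorem deriv_snd_neg_deriv_snd (hψ : IsCubicStream ψ u p₃ p₂ p₁ V) (hx : u x ∈ V) (y : ℝ) :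
    deriv (fun y' ↦ -deriv (fun y'' ↦ ψ x y'') y') y = -(6 * p₃ (u x) * y + 2 * p₂ (u x)) := by
  simp only [hψ.deriv_snd hx]
  exact (hasDerivAt_cubicStreamDy_snd p₃ p₂ p₁ (u x) y).neg.deriv

theorem deriv_snd_deriv_fst (hψ : IsCubicStream ψ u p₃ p₂ p₁ V) (hx : u x ∈ V) (y : ℝ) :
    deriv (fun y' ↦ deriv (fun x' ↦ ψ x' y') x) y
      = cubicStreamDy (deriv p₃) (deriv p₂) (deriv p₁) (u x) y * deriv u x := by
  simp only [hψ.deriv_fst hx]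
  exact ((hasDerivAt_cubicStream_snd _ _ _ (u x) y).mul_const _).deriv

theorem deriv_fst_deriv_fst (hψ : IsCubicStream ψ u p₃ p₂ p₁ V) (hx : u x ∈ V) (y : ℝ) :
    deriv (fun x' ↦ deriv (fun x'' ↦ ψ x'' y) x') x
      = cubicStream (deriv (deriv p₃)) (deriv (deriv p₂)) (deriv (deriv p₁)) (u x) y
          * deriv u x ^ 2
        + cubicStream (deriv p₃) (deriv p₂) (deriv p₁) (u x) y * deriv (deriv u) x := by
  obtain ⟨h₃, h₂, h₁⟩ := hψ.differentiableAt_deriv_coeffs hx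
  have hu' : HasDerivAt (deriv u) (deriv (deriv u) x) x :=
    (hψ.contDiff.contDiffOn.differentiableAt_deriv isOpen_univ (mem_univ x)).hasDerivAt
  refine ((((hasDerivAt_cubicStream_fst h₃ h₂ h₁ y).comp x (hψ.hasDerivAt_depth x)).mul
    hu').congr_deriv (by simp only [comp_apply]; ring) |>.congr_of_eventuallyEq ?_).deriv
  filter_upwards [hψ.eventually_mem hx] with x' hx'
  simp [hψ.deriv_fst hx' y]

theorem divergence_eq_zero (hψ : IsCubicStream ψ u p₃ p₂ p₁ V) (hx : u x ∈ V) (y : ℝ) :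
    deriv (fun x' ↦ -deriv (fun y' ↦ ψ x' y') y) x
      + deriv (fun y' ↦ deriv (fun x' ↦ ψ x' y') x) y = 0 := by
  rw [hψ.deriv_fst_neg_deriv_snd hx, hψ.deriv_snd_deriv_fst hx, neg_add_cancel]

end IsCubicStream

def fluidLayer (M : ℝ) : Set (ℝ × ℝ) := {q | 0 < q.1 ∧ q.1 ≤ M ∧ 0 ≤ q.2 ∧ q.2 ≤ q.1}

section FluidLayer

variable {M : ℝ}

theorem isBigO_fluidLayer_of_continuousOn {F : ℝ → ℝ} (hF : ContinuousOn F (Icc 0 M)) :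
    (fun q : ℝ × ℝ ↦ F q.1) =O[𝓟 (fluidLayer M)] fun _ ↦ (1 : ℝ) :=
  (hF.isBigO_principal isCompact_Icc (by norm_num)).comp_tendsto
    (tendsto_principal_principal.2 fun _ hq ↦ ⟨hq.1.le, hq.2.1⟩)

theorem isBigO_fluidLayer_snd : (fun q : ℝ × ℝ ↦ q.2) =O[𝓟 (fluidLayer M)] fun _ ↦ (1 : ℝ) :=
  isBigO_principal.2 ⟨M, fun q ⟨_, hsM, hy, hys⟩ ↦ by
    simpa [abs_of_nonneg hy] using hys.trans hsM⟩

theorem isBigO_fluidLayer_snd_div_fst :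
    (fun q : ℝ × ℝ ↦ q.2 / q.1) =O[𝓟 (fluidLayer M)] fun _ ↦ (1 : ℝ) :=
  isBigO_principal.2 ⟨1, fun q ⟨hs, _, hy, hys⟩ ↦ by
    simpa [abs_of_nonneg hy, abs_of_pos hs] using (div_le_one hs).2 hys⟩

/-- `G` may blow up like `s⁻ᵏ` at `s = 0`; on the layer this is absorbed by `y ^ m`, `y ≤ s`. -/
theorem isBigO_fluidLayer_mul_snd_pow {F G : ℝ → ℝ} (hF : ContinuousOn F (Icc 0 M)) {k m : ℕ}
    (hkm : k ≤ m) (hG : ∀ s, 0 < s → s ≤ M → G s * s ^ k = F s) :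
    (fun q : ℝ × ℝ ↦ G q.1 * q.2 ^ m) =O[𝓟 (fluidLayer M)] fun _ ↦ (1 : ℝ) := by
  refine (((isBigO_fluidLayer_of_continuousOn hF).mul
    (isBigO_fluidLayer_snd_div_fst.pow k)).mul (isBigO_fluidLayer_snd.pow (m - k))).congr' ?_
    (by simp)
  filter_upwards [mem_principal_self _] with q ⟨hs, hsM, _⟩
  rw [← hG q.1 hs hsM, div_pow, ← Nat.sub_add_cancel hkm, pow_add, Nat.add_sub_cancel]
  field_simp

theorem isBigO_fluidLayer_mul_snd_pow_of_continuousOn {G : ℝ → ℝ}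
    (hG : ContinuousOn G (Icc 0 M)) (m : ℕ) :
    (fun q : ℝ × ℝ ↦ G q.1 * q.2 ^ m) =O[𝓟 (fluidLayer M)] fun _ ↦ (1 : ℝ) :=
  isBigO_fluidLayer_mul_snd_pow hG (Nat.zero_le m) fun s _ _ ↦ by rw [pow_zero, mul_one]

theorem exists_pos_bound_of_isBigO_fluidLayer {F : ℝ → ℝ → ℝ}
    (hF : uncurry F =O[𝓟 (fluidLayer M)] fun _ ↦ (1 : ℝ)) :
    ∃ c > 0, ∀ s y, 0 < s → s ≤ M → 0 ≤ y → y ≤ s → |F s y| ≤ c := by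
  obtain ⟨c, hc, h⟩ := hF.exists_pos
  exact ⟨c, hc, fun s y hs hsM hy hys ↦ by
    simpa using isBigOWith_principal.1 h (s, y) ⟨hs, hsM, hy, hys⟩⟩

end FluidLayer

section DivId

variable {g : ℝ → ℝ} {U : Set ℝ} {s : ℝ}

theorem deriv_div_id_mul_sq (hg : DifferentiableAt ℝ g s) (hs : s ≠ 0) :
    deriv (fun s ↦ g s / s) s * s ^ 2 = deriv g s * s - g s := by
  rw [(hg.hasDerivAt.fun_div (hasDerivAt_id' s) hs).deriv]
  field_simp

theorem deriv_deriv_div_id_mul_cube (hg : ContDiffOn ℝ 2 g U) (hU : IsOpen U) (hsU : s ∈ U)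
    (hs : s ≠ 0) :
    deriv (deriv fun s ↦ g s / s) s * s ^ 3
      = deriv (deriv g) s * s ^ 2 - 2 * (deriv g s * s - g s) := by
  have hg' (s : ℝ) (hsU : s ∈ U) : DifferentiableAt ℝ g s :=
    (hg.contDiffAt (hU.mem_nhds hsU)).differentiableAt (by norm_num)
  have hev : deriv (fun s ↦ g s / s) =ᶠ[𝓝 s] fun s ↦ (deriv g s * s - g s) / s ^ 2 := by
    filter_upwards [hU.mem_nhds hsU, eventually_ne_nhds hs] with s' hs'U hs'
    rw [eq_div_iff (pow_ne_zero 2 hs'), deriv_div_id_mul_sq (hg' s' hs'U) hs']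
  rw [hev.deriv_eq, ((((hg.differentiableAt_deriv hU hsU).hasDerivAt.fun_mul
    (hasDerivAt_id' s)).fun_sub (hg' s hsU).hasDerivAt).fun_div (hasDerivAt_pow 2 s)
    (pow_ne_zero 2 hs)).deriv]
  field_simp
  ring

end DivId

section CubicStreamBounds

variable {g p₂ p₁ : ℝ → ℝ} {U : Set ℝ} {M : ℝ}

theorem isBigO_fluidLayer_cubicStream (hU : IsOpen U) (hMU : Icc 0 M ⊆ U)
    (hg : ContDiffOn ℝ 2 g U) (hp₂ : ContDiffOn ℝ 2 p₂ U) (hp₁ : ContDiffOn ℝ 2 p₁ U) :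
    uncurry (fun s y ↦ 6 * (g s / s) * y + 2 * p₂ s) =O[𝓟 (fluidLayer M)] (fun _ ↦ (1 : ℝ)) ∧
      uncurry (cubicStreamDy (deriv fun s ↦ g s / s) (deriv p₂) (deriv p₁))
        =O[𝓟 (fluidLayer M)] (fun _ ↦ (1 : ℝ)) ∧
      uncurry (cubicStream (deriv fun s ↦ g s / s) (deriv p₂) (deriv p₁))
        =O[𝓟 (fluidLayer M)] (fun _ ↦ (1 : ℝ)) ∧
      uncurry (cubicStream (deriv (deriv fun s ↦ g s / s)) (deriv (deriv p₂)) (deriv (deriv p₁)))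
        =O[𝓟 (fluidLayer M)] (fun _ ↦ (1 : ℝ)) := by
  have hsU {s : ℝ} (hs : 0 < s) (hsM : s ≤ M) : s ∈ U := hMU ⟨hs.le, hsM⟩
  have g₀ := hg.continuousOn.mono hMU
  have g₁ := (hg.continuousOn_deriv_of_isOpen hU (by norm_num)).mono hMU
  have g₂ := (hg.continuousOn_deriv_deriv hU).mono hMU
  have b₀ := hp₂.continuousOn.mono hMU
  have b₁ := (hp₂.continuousOn_deriv_of_isOpen hU (by norm_num)).mono hMU
  have b₂ := (hp₂.continuousOn_deriv_deriv hU).mono hMU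
  have c₁ := (hp₁.continuousOn_deriv_of_isOpen hU (by norm_num)).mono hMU
  have c₂ := (hp₁.continuousOn_deriv_deriv hU).mono hMU
  have a₀ := isBigO_fluidLayer_mul_snd_pow (G := fun s ↦ g s / s) (m := 1) g₀ le_rfl
    fun s hs _ ↦ by field_simp
  have a₁ {m : ℕ} (hm : 2 ≤ m) := isBigO_fluidLayer_mul_snd_pow (G := deriv fun s ↦ g s / s)
    (F := fun s ↦ deriv g s * s - g s) (by fun_prop) hm fun s hs hsM ↦
      deriv_div_id_mul_sq ((hg.contDiffAt (hU.mem_nhds (hsU hs hsM))).differentiableAt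
        (by norm_num)) hs.ne'
  have a₂ := isBigO_fluidLayer_mul_snd_pow (G := deriv (deriv fun s ↦ g s / s)) (m := 3)
    (F := fun s ↦ deriv (deriv g) s * s ^ 2 - 2 * (deriv g s * s - g s)) (by fun_prop) le_rfl
    fun s hs hsM ↦ deriv_deriv_div_id_mul_cube hg hU (hsU hs hsM) hs.ne'
  refine ⟨?_, ?_, ?_, ?_⟩
  · refine ((a₀.const_mul_left 6).add
      ((isBigO_fluidLayer_of_continuousOn b₀).const_mul_left 2)).congr_left fun q ↦ ?_
    simp only [uncurry, pow_one]
    ring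
  · refine ((((a₁ le_rfl).const_mul_left 3).add
      ((isBigO_fluidLayer_mul_snd_pow_of_continuousOn b₁ 1).const_mul_left 2)).add
      (isBigO_fluidLayer_of_continuousOn c₁)).congr_left fun q ↦ ?_
    simp only [uncurry, pow_one, cubicStreamDy]
    ring
  · refine (((a₁ (m := 3) (by norm_num)).add (isBigO_fluidLayer_mul_snd_pow_of_continuousOn b₁ 2)).add
      (isBigO_fluidLayer_mul_snd_pow_of_continuousOn c₁ 1)).congr_left fun q ↦ ?_
    simp only [uncurry, pow_one, cubicStream]
  · refine ((a₂.add (isBigO_fluidLayer_mul_snd_pow_of_continuousOn b₂ 2)).add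
      (isBigO_fluidLayer_mul_snd_pow_of_continuousOn c₂ 1)).congr_left fun q ↦ ?_
    simp only [uncurry, pow_one, cubicStream]

end CubicStreamBounds

noncomputable def aRed (βs βb s : ℝ) : ℝ :=
  -2 * (1 / βs + 1 / βb + s / (βs * βb)) / Dcoef βs βb s

noncomputable def bRed (βs βb s : ℝ) : ℝ := 3 * (lamS βs s + 2) / βb / Dcoef βs βb s

section Coefficients

variable {βs βb : ℝ}

theorem aCoef_eq_mul_aRed (βs βb s : ℝ) : aCoef βs βb s = s * aRed βs βb s := by
  unfold aCoef aRed lamS lamB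
  ring

theorem bCoef_eq_mul_bRed (βs βb s : ℝ) : bCoef βs βb s = s * bRed βs βb s := by
  unfold bCoef bRed lamB
  ring

theorem mul_Phi_div_eq_cubicStream {s : ℝ} (hs : s ≠ 0) (y : ℝ) :
    s * Phi βs βb s (y / s)
      = cubicStream (fun s ↦ aRed βs βb s / s) (bRed βs βb) (cCoef βs βb) s y := by
  unfold Phi cubicStream
  rw [aCoef_eq_mul_aRed, bCoef_eq_mul_bRed]
  field_simp

theorem Dcoef_pos (hβs : 0 < βs) (hβb : 0 < βb) {s : ℝ} (hs : 0 ≤ s) : 0 < Dcoef βs βb s := by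
  unfold Dcoef lamS lamB
  positivity

theorem contDiff_Dcoef (βs βb : ℝ) : ContDiff ℝ 2 (Dcoef βs βb) := by
  unfold Dcoef lamS lamB
  fun_prop

theorem isOpen_setOf_Dcoef_ne_zero (βs βb : ℝ) : IsOpen {s | Dcoef βs βb s ≠ 0} :=
  isOpen_ne_fun (contDiff_Dcoef βs βb).continuous continuous_const

theorem Ici_subset_setOf_Dcoef_ne_zero (hβs : 0 < βs) (hβb : 0 < βb) :
    Ici 0 ⊆ {s | Dcoef βs βb s ≠ 0} :=
  fun _ hs ↦ (Dcoef_pos hβs hβb hs).ne'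

theorem contDiffOn_aRed : ContDiffOn ℝ 2 (aRed βs βb) {s | Dcoef βs βb s ≠ 0} := by
  unfold aRed
  exact ContDiffOn.div (by fun_prop) (contDiff_Dcoef βs βb).contDiffOn fun _ hs ↦ hs

theorem contDiffOn_bRed : ContDiffOn ℝ 2 (bRed βs βb) {s | Dcoef βs βb s ≠ 0} := by
  unfold bRed lamS
  exact ContDiffOn.div (by fun_prop) (contDiff_Dcoef βs βb).contDiffOn fun _ hs ↦ hs

theorem contDiffOn_cCoef : ContDiffOn ℝ 2 (cCoef βs βb) {s | Dcoef βs βb s ≠ 0} := by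
  unfold cCoef lamS
  exact ContDiffOn.div (by fun_prop) (contDiff_Dcoef βs βb).contDiffOn fun _ hs ↦ hs

theorem isCubicStream_psiF (hβs : 0 < βs) (hβb : 0 < βb) {h : ℝ → ℝ → ℝ} {t : ℝ}
    (hreg : ContDiff ℝ 2 fun x ↦ h x t) :
    IsCubicStream (fun x y ↦ psiF βs βb h x y t) (fun x ↦ h x t) (fun s ↦ aRed βs βb s / s)
      (bRed βs βb) (cCoef βs βb) (Ioi 0) := by
  have hU := Ioi_subset_Ici_self.trans (Ici_subset_setOf_Dcoef_ne_zero hβs hβb)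
  exact
    { isOpen := isOpen_Ioi
      contDiff := hreg
      contDiffOn₃ := (contDiffOn_aRed.mono hU).div contDiffOn_id fun _ hs ↦ ne_of_gt hs
      contDiffOn₂ := contDiffOn_bRed.mono hU
      contDiffOn₁ := contDiffOn_cCoef.mono hU
      eq_cubicStream := fun _ hx ↦ funext (mul_Phi_div_eq_cubicStream (ne_of_gt hx)) }

end Coefficients

theorem test_field_divergence_free_and_gradient_bounds_general
    (βs βb : ℝ) (hβs : 0 < βs) (hβb : 0 < βb)
    (L T M : ℝ) (hM : 0 < M)
    (h : ℝ → ℝ → ℝ)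
    (hpos : ∀ x ∈ Set.Icc (0:ℝ) L, ∀ t ∈ Set.Icc (0:ℝ) T, 0 < h x t ∧ h x t ≤ M)
    (hreg : ∀ t, ContDiff ℝ 2 fun x => h x t)
    (hdx : ∀ x ∈ Set.Icc (0:ℝ) L, ∀ t ∈ Set.Icc (0:ℝ) T,
      |deriv (fun x' => h x' t) x| ≤ M) :
    (∀ t ∈ Set.Icc (0:ℝ) T, ∀ x ∈ Set.Icc (0:ℝ) L, ∀ y ∈ Set.Icc (0:ℝ) (h x t),
      deriv (fun x' => phi1 βs βb h x' y t) x +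
        deriv (fun y' => phi2 βs βb h x y' t) y = 0) ∧
    ∃ C > 0, ∀ t ∈ Set.Icc (0:ℝ) T, ∀ x ∈ Set.Icc (0:ℝ) L, ∀ y ∈ Set.Icc (0:ℝ) (h x t),
      |deriv (fun x' => phi1 βs βb h x' y t) x| ≤ C ∧
      |deriv (fun y' => phi1 βs βb h x y' t) y| ≤ C ∧
      |deriv (fun y' => phi2 βs βb h x y' t) y| ≤ C ∧
      |deriv (fun x' => phi2 βs βb h x' y t) x| ≤
        C * (1 + |deriv (deriv fun x' => h x' t) x|) := by
  have hψ t := isCubicStream_psiF hβs hβb (hreg t)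
  simp only [phi1, phi2]
  refine ⟨fun t ht x hx y _ ↦ (hψ t).divergence_eq_zero (hpos x hx t ht).1 y, ?_⟩
  obtain ⟨h₁, h₂, h₃, h₄⟩ := isBigO_fluidLayer_cubicStream (M := M)
    (isOpen_setOf_Dcoef_ne_zero βs βb) (Icc_subset_Ici_self.trans
    (Ici_subset_setOf_Dcoef_ne_zero hβs hβb)) contDiffOn_aRed contDiffOn_bRed contDiffOn_cCoef
  obtain ⟨c₁, hc₁, hb₁⟩ := exists_pos_bound_of_isBigO_fluidLayer h₁
  obtain ⟨c₂, hc₂, hb₂⟩ := exists_pos_bound_of_isBigO_fluidLayer h₂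
  obtain ⟨c₃, hc₃, hb₃⟩ := exists_pos_bound_of_isBigO_fluidLayer h₃
  obtain ⟨c₄, hc₄, hb₄⟩ := exists_pos_bound_of_isBigO_fluidLayer h₄
  refine ⟨c₁ + c₂ * M + c₃ + c₄ * M ^ 2, by positivity, fun t ht x hx y ⟨hy, hys⟩ ↦ ?_⟩
  obtain ⟨hs, hsM⟩ := hpos x hx t ht
  have hu' := hdx x hx t ht
  have hu'' := abs_nonneg (deriv (deriv fun x' ↦ h x' t) x)
  have hD := mul_le_mul (hb₂ _ _ hs hsM hy hys) hu' (abs_nonneg _) hc₂.le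
  have hQ₂ := mul_le_mul (hb₄ _ _ hs hsM hy hys) (pow_le_pow_left₀ (abs_nonneg _) hu' 2)
    (by positivity) hc₄.le
  have hQ₁ := mul_le_mul_of_nonneg_right (hb₃ _ _ hs hsM hy hys) hu''
  rw [(hψ t).deriv_fst_neg_deriv_snd hs, (hψ t).deriv_snd_neg_deriv_snd hs,
    (hψ t).deriv_snd_deriv_fst hs, (hψ t).deriv_fst_deriv_fst hs, abs_neg, abs_neg, abs_mul]
  refine ⟨by nlinarith, by nlinarith [hb₁ _ _ hs hsM hy hys], by nlinarith,
    (abs_add_le _ _).trans ?_⟩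
  rw [abs_mul, abs_mul, abs_pow]
  nlinarith [mul_nonneg (by positivity : 0 ≤ c₁ + c₂ * M + c₄ * M ^ 2) hu'']

theorem test_field_divergence_free_and_gradient_bounds
    (βs βb : ℝ) (hβs : 0 < βs) (hβb : 0 < βb)
    (L T M : ℝ) (hL : 0 < L) (hT : 0 < T) (hM : 0 < M)
    (h : ℝ → ℝ → ℝ)
    (hpos : ∀ x ∈ Set.Icc (0:ℝ) L, ∀ t ∈ Set.Icc (0:ℝ) T, 0 < h x t ∧ h x t ≤ M)
    (hreg : ∀ t, ContDiff ℝ 2 fun x => h x t)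
    (hdx : ∀ x ∈ Set.Icc (0:ℝ) L, ∀ t ∈ Set.Icc (0:ℝ) T,
      |deriv (fun x' => h x' t) x| ≤ M) :
    (∀ t ∈ Set.Icc (0:ℝ) T, ∀ x ∈ Set.Icc (0:ℝ) L, ∀ y ∈ Set.Icc (0:ℝ) (h x t),
      deriv (fun x' => phi1 βs βb h x' y t) x +
        deriv (fun y' => phi2 βs βb h x y' t) y = 0) ∧
    ∃ C > 0, ∀ t ∈ Set.Icc (0:ℝ) T, ∀ x ∈ Set.Icc (0:ℝ) L, ∀ y ∈ Set.Icc (0:ℝ) (h x t),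
      |deriv (fun x' => phi1 βs βb h x' y t) x| ≤ C ∧
      |deriv (fun y' => phi1 βs βb h x y' t) y| ≤ C ∧
      |deriv (fun y' => phi2 βs βb h x y' t) y| ≤ C ∧
      |deriv (fun x' => phi2 βs βb h x' y t) x| ≤
        C * (1 + |deriv (deriv fun x' => h x' t) x|) :=
  test_field_divergence_free_and_gradient_bounds_general βs βb hβs hβb L T M hM h hpos hreg hdx
end

section
/- Suppose h is twice continuously differentiable in (x,t) with |∂_x h(x,t)| ≤ M for all (x,t). Then there exists a constant C > 0, depending only on β_s, β_b and M, such that for all t ∈ [0,T], x ∈ [0,L] and 0 ≤ y ≤ h(x,t) one has |∂_t φ₁(x,y,t)| ≤ C·(1 + |∂_t h(x,t)|) and |∂_t φ₂(x,y,t)| ≤ C·( |∂_t h(x,t)|·(|∂_t h(x,t)| + |∂_x∂_t h(x,t)|) + |∂_t h(x,t)| + |∂_x∂_t h(x,t)| ). -/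
noncomputable section

open Filter Topology

namespace TestField

section Slices

variable {E : Type*} [NormedAddCommGroup E] [NormedSpace ℝ E] {F : ℝ × ℝ → E} {x t : ℝ}

lemma hasDerivAt_fst_slice (hF : DifferentiableAt ℝ F (x, t)) :
    HasDerivAt (fun x' => F (x', t)) (fderiv ℝ F (x, t) (1, 0)) x :=
  hF.hasFDerivAt.comp_hasDerivAt x ((hasDerivAt_id x).prodMk (hasDerivAt_const x t))

lemma hasDerivAt_snd_slice (hF : DifferentiableAt ℝ F (x, t)) :
    HasDerivAt (fun t' => F (x, t')) (fderiv ℝ F (x, t) (0, 1)) t :=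
  hF.hasFDerivAt.comp_hasDerivAt t ((hasDerivAt_const t x).prodMk (hasDerivAt_id t))

end Slices

lemma hasDerivAt_deriv_comm {f : ℝ → ℝ → ℝ} (hf : ContDiff ℝ 2 fun p : ℝ × ℝ => f p.1 p.2)
    (x t : ℝ) :
    HasDerivAt (fun t' => deriv (fun x' => f x' t') x)
      (deriv (fun x' => deriv (fun t' => f x' t') t) x) t := by
  set F : ℝ × ℝ → ℝ := fun p => f p.1 p.2
  have hF : Differentiable ℝ F := hf.differentiable (by norm_num)
  have hF' : Differentiable ℝ (fderiv ℝ F) :=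
    (hf.fderiv_right (m := 1) (by norm_num)).differentiable (by norm_num)
  have hx : (fun t' => deriv (fun x' => f x' t') x) = fun t' => fderiv ℝ F (x, t') (1, 0) := by
    funext t'; exact (hasDerivAt_fst_slice (hF _)).deriv
  have ht : (fun x' => deriv (fun t' => f x' t') t) = fun x' => fderiv ℝ F (x', t) (0, 1) := by
    funext x'; exact (hasDerivAt_snd_slice (hF _)).deriv
  have apply_slice (v : ℝ × ℝ) {g : ℝ → ℝ × ℝ →L[ℝ] ℝ} {g' : ℝ × ℝ →L[ℝ] ℝ} {r : ℝ}
      (hg : HasDerivAt g g' r) : HasDerivAt (fun r => g r v) (g' v) r :=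
    (ContinuousLinearMap.apply ℝ ℝ v).hasFDerivAt.comp_hasDerivAt r hg
  rw [hx, ht, (apply_slice _ (hasDerivAt_fst_slice (hF' _))).deriv,
    (hf.contDiffAt.isSymmSndFDerivAt (by simp)) (1, 0) (0, 1)]
  exact apply_slice _ (hasDerivAt_snd_slice (hF' _))

lemma hasDerivAt_mul_div_pow {g : ℝ → ℝ} {g' s : ℝ} (c : ℝ) (k : ℕ) (hg : HasDerivAt g g' s)
    (hs : s ≠ 0) :
    HasDerivAt (fun s => g s * c / s ^ k) (g' * c / s ^ k - k * (g s * c / s ^ (k + 1))) s := by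
  refine ((hg.mul_const c).div (hasDerivAt_pow k s) (pow_ne_zero _ hs)).congr_deriv ?_
  rcases k with _ | k
  · simp
  · rw [Nat.add_sub_cancel]; field_simp; ring

lemma hasDerivAt_deriv_of_contDiffAt {f : ℝ → ℝ} {s : ℝ} (hf : ContDiffAt ℝ 2 f s) :
    HasDerivAt (deriv f) (deriv (deriv f) s) s :=
  ((hf.derivWithin (m := 1) (by norm_num)).differentiableAt (by norm_num)).hasDerivAt

lemma abs_mul_pow_div_pow_le {g y s : ℝ} {n k : ℕ} (hs : 0 < s) (hy : 0 ≤ y) (hys : y ≤ s)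
    (hkn : k ≤ n) : |g * y ^ n / s ^ k| ≤ |g| * y ^ (n - k) := by
  have hsplit : g * y ^ n / s ^ k = g * y ^ (n - k) * (y / s) ^ k := by
    rw [div_pow, ← mul_div_assoc, mul_assoc, ← pow_add, Nat.sub_add_cancel hkn]
  have hu : 0 ≤ y / s := div_nonneg hy hs.le
  rw [hsplit, abs_mul, abs_mul, abs_of_nonneg (pow_nonneg hy _), abs_of_nonneg (pow_nonneg hu _)]
  exact mul_le_of_le_one_right (by positivity) (pow_le_one₀ hu ((div_le_one hs).2 hys))

lemma abs_mul_pow_div_pow_le_sq {g y s K N : ℝ} {n k : ℕ} (hg : |g| ≤ K) (hs : 0 < s) (hy : 0 ≤ y)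
    (hys : y ≤ s) (hsN : s ≤ N) (hN : 1 ≤ N) (hkn : k ≤ n := by norm_num)
    (hnk : n ≤ k + 2 := by norm_num) : |g * y ^ n / s ^ k| ≤ K * N ^ 2 := by
  have hyN : y ^ (n - k) ≤ N ^ 2 :=
    (pow_le_pow_left₀ hy (hys.trans hsN) _).trans (pow_le_pow_right₀ hN (by omega))
  exact (abs_mul_pow_div_pow_le hs hy hys hkn).trans
    (mul_le_mul hg hyN (pow_nonneg hy _) ((abs_nonneg g).trans hg))

def AbsDerivsLE (f : ℝ → ℝ) (K s : ℝ) : Prop :=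
  |f s| ≤ K ∧ |deriv f s| ≤ K ∧ |deriv (deriv f) s| ≤ K

lemma exists_absDerivsLE {f : ℝ → ℝ} {S : Set ℝ} (hS : IsCompact S)
    (hf : ∀ s ∈ S, ContDiffAt ℝ 2 f s) : ∃ K, ∀ s ∈ S, AbsDerivsLE f K s := by
  have hcont : ContinuousOn (fun s => |f s| + |deriv f s| + |deriv (deriv f) s|) S := by
    intro s hs
    have h1 : ContDiffAt ℝ 1 (deriv f) s := (hf s hs).derivWithin (by norm_num)
    have h2 : ContDiffAt ℝ 0 (deriv (deriv f)) s := h1.derivWithin (by norm_num)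
    exact (((hf s hs).continuousAt.abs.add h1.continuousAt.abs).add
      h2.continuousAt.abs).continuousWithinAt
  obtain ⟨K, hK⟩ := hS.exists_bound_of_continuousOn hcont
  refine ⟨K, fun s hs => ?_⟩
  have hsum := (le_abs_self _).trans (hK s hs)
  have := abs_nonneg (f s)
  have := abs_nonneg (deriv f s)
  have := abs_nonneg (deriv (deriv f) s)
  exact ⟨by linarith, by linarith, by linarith⟩

lemma AbsDerivsLE.mono {f : ℝ → ℝ} {K K' s : ℝ} (hf : AbsDerivsLE f K s) (hK : K ≤ K') :
    AbsDerivsLE f K' s :=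
  ⟨hf.1.trans hK, hf.2.1.trans hK, hf.2.2.trans hK⟩

section Stream

variable (A B C : ℝ → ℝ)

/- `stream A B C y s` is the stream function at height `s = h` when `a = s * A`, `b = s * B`,
`c = C`; the definitions after it are its partial derivatives in the variables named in
their suffix. -/
def stream (y s : ℝ) : ℝ := A s * y ^ 3 / s + B s * y ^ 2 + C s * y

def streamY (y s : ℝ) : ℝ := 3 * (A s * y ^ 2 / s) + 2 * (B s * y) + C s

def streamYS (y s : ℝ) : ℝ :=
  3 * (deriv A s * y ^ 2 / s - A s * y ^ 2 / s ^ 2) + 2 * deriv B s * y + deriv C s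

def streamS (y s : ℝ) : ℝ :=
  deriv A s * y ^ 3 / s - A s * y ^ 3 / s ^ 2 + deriv B s * y ^ 2 + deriv C s * y

def streamSS (y s : ℝ) : ℝ :=
  deriv (deriv A) s * y ^ 3 / s - 2 * (deriv A s * y ^ 3 / s ^ 2) + 2 * (A s * y ^ 3 / s ^ 3)
    + deriv (deriv B) s * y ^ 2 + deriv (deriv C) s * y

variable {A B C} {y s : ℝ}

lemma hasDerivAt_stream_y :
    HasDerivAt (fun y => stream A B C y s) (streamY A B C y s) y := by
  have := ((((hasDerivAt_pow 3 y).const_mul (A s)).div_const s).add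
    ((hasDerivAt_pow 2 y).const_mul (B s))).add ((hasDerivAt_id y).const_mul (C s))
  refine this.congr_deriv ?_
  unfold streamY; push_cast; ring

lemma hasDerivAt_streamY (hA : DifferentiableAt ℝ A s) (hB : DifferentiableAt ℝ B s)
    (hC : DifferentiableAt ℝ C s) (hs : s ≠ 0) :
    HasDerivAt (streamY A B C y) (streamYS A B C y s) s := by
  have hA' := hasDerivAt_mul_div_pow (y ^ 2) 1 hA.hasDerivAt hs
  simp only [pow_one] at hA'
  have := ((hA'.const_mul 3).add ((hB.hasDerivAt.mul_const y).const_mul 2)).add hC.hasDerivAt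
  refine this.congr_deriv ?_
  unfold streamYS; push_cast; ring

lemma hasDerivAt_stream (hA : DifferentiableAt ℝ A s) (hB : DifferentiableAt ℝ B s)
    (hC : DifferentiableAt ℝ C s) (hs : s ≠ 0) :
    HasDerivAt (stream A B C y) (streamS A B C y s) s := by
  have hA' := hasDerivAt_mul_div_pow (y ^ 3) 1 hA.hasDerivAt hs
  simp only [pow_one] at hA'
  have := (hA'.add (hB.hasDerivAt.mul_const (y ^ 2))).add (hC.hasDerivAt.mul_const y)
  refine this.congr_deriv ?_
  unfold streamS; push_cast; ring

lemma hasDerivAt_streamS (hA : ContDiffAt ℝ 2 A s) (hB : ContDiffAt ℝ 2 B s)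
    (hC : ContDiffAt ℝ 2 C s) (hs : s ≠ 0) :
    HasDerivAt (streamS A B C y) (streamSS A B C y s) s := by
  have hA₁ := hasDerivAt_mul_div_pow (y ^ 3) 1 (hasDerivAt_deriv_of_contDiffAt hA) hs
  have hA₂ := hasDerivAt_mul_div_pow (y ^ 3) 2 ((hA.differentiableAt (by norm_num)).hasDerivAt) hs
  simp only [pow_one] at hA₁
  have := ((hA₁.sub hA₂).add ((hasDerivAt_deriv_of_contDiffAt hB).mul_const (y ^ 2))).add
    ((hasDerivAt_deriv_of_contDiffAt hC).mul_const y)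
  refine this.congr_deriv ?_
  unfold streamSS; push_cast; ring

section Bounds

variable {K N : ℝ} (hA : AbsDerivsLE A K s) (hB : AbsDerivsLE B K s) (hC : AbsDerivsLE C K s)
  (hs : 0 < s) (hy : 0 ≤ y) (hys : y ≤ s) (hsN : s ≤ N) (hN : 1 ≤ N)
include hA hB hC hs hy hys hsN hN

lemma abs_streamYS_le : |streamYS A B C y s| ≤ 9 * K * N ^ 2 := by
  have t₁ := abs_mul_pow_div_pow_le_sq (n := 2) (k := 1) hA.2.1 hs hy hys hsN hN
  have t₂ := abs_mul_pow_div_pow_le_sq (n := 2) (k := 2) hA.1 hs hy hys hsN hN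
  have t₃ := abs_mul_pow_div_pow_le_sq (n := 1) (k := 0) hB.2.1 hs hy hys hsN hN
  have t₄ := abs_mul_pow_div_pow_le_sq (n := 0) (k := 0) hC.2.1 hs hy hys hsN hN
  simp only [pow_one, pow_zero, div_one, mul_one] at t₁ t₃ t₄
  rw [abs_le] at t₁ t₂ t₃ t₄ ⊢
  unfold streamYS
  constructor <;> linarith [t₁.1, t₁.2, t₂.1, t₂.2, t₃.1, t₃.2, t₄.1, t₄.2]

lemma abs_streamS_le : |streamS A B C y s| ≤ 4 * K * N ^ 2 := by
  have t₁ := abs_mul_pow_div_pow_le_sq (n := 3) (k := 1) hA.2.1 hs hy hys hsN hN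
  have t₂ := abs_mul_pow_div_pow_le_sq (n := 3) (k := 2) hA.1 hs hy hys hsN hN
  have t₃ := abs_mul_pow_div_pow_le_sq (n := 2) (k := 0) hB.2.1 hs hy hys hsN hN
  have t₄ := abs_mul_pow_div_pow_le_sq (n := 1) (k := 0) hC.2.1 hs hy hys hsN hN
  simp only [pow_one, pow_zero, div_one] at t₁ t₃ t₄
  rw [abs_le] at t₁ t₂ t₃ t₄ ⊢
  unfold streamS
  constructor <;> linarith [t₁.1, t₁.2, t₂.1, t₂.2, t₃.1, t₃.2, t₄.1, t₄.2]

lemma abs_streamSS_le : |streamSS A B C y s| ≤ 7 * K * N ^ 2 := by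
  have t₁ := abs_mul_pow_div_pow_le_sq (n := 3) (k := 1) hA.2.2 hs hy hys hsN hN
  have t₂ := abs_mul_pow_div_pow_le_sq (n := 3) (k := 2) hA.2.1 hs hy hys hsN hN
  have t₃ := abs_mul_pow_div_pow_le_sq (n := 3) (k := 3) hA.1 hs hy hys hsN hN
  have t₄ := abs_mul_pow_div_pow_le_sq (n := 2) (k := 0) hB.2.2 hs hy hys hsN hN
  have t₅ := abs_mul_pow_div_pow_le_sq (n := 1) (k := 0) hC.2.2 hs hy hys hsN hN
  simp only [pow_one, pow_zero, div_one] at t₁ t₄ t₅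
  rw [abs_le] at t₁ t₂ t₃ t₄ t₅ ⊢
  unfold streamSS
  constructor <;> linarith [t₁.1, t₁.2, t₂.1, t₂.2, t₃.1, t₃.2, t₄.1, t₄.2, t₅.1, t₅.2]
end Bounds

end Stream

def aRed (βs βb s : ℝ) : ℝ := -2 * (1 / βs + 1 / βb + lamS βs s / βb) / Dcoef βs βb s

def bRed (βs βb s : ℝ) : ℝ := 3 * (lamS βs s + 2) / βb / Dcoef βs βb s

lemma aCoef_eq_mul_aRed (βs βb s : ℝ) : aCoef βs βb s = s * aRed βs βb s := by
  unfold aCoef aRed lamS lamB; ring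

lemma bCoef_eq_mul_bRed (βs βb s : ℝ) : bCoef βs βb s = s * bRed βs βb s := by
  unfold bCoef bRed lamS lamB; ring

lemma psiF_eq_stream {βs βb : ℝ} {h : ℝ → ℝ → ℝ} {x y t : ℝ} (hs : h x t ≠ 0) :
    psiF βs βb h x y t = stream (aRed βs βb) (bRed βs βb) (cCoef βs βb) y (h x t) := by
  unfold psiF Phi stream
  rw [aCoef_eq_mul_aRed, bCoef_eq_mul_bRed]
  field_simp

variable {βs βb : ℝ}

lemma phi1_eq {h : ℝ → ℝ → ℝ} {x y t : ℝ} (hs : 0 < h x t) :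
    phi1 βs βb h x y t = -streamY (aRed βs βb) (bRed βs βb) (cCoef βs βb) y (h x t) := by
  have hψ : (fun y' => psiF βs βb h x y' t) =
      fun y' => stream (aRed βs βb) (bRed βs βb) (cCoef βs βb) y' (h x t) :=
    funext fun _ => psiF_eq_stream hs.ne'
  rw [phi1, hψ, hasDerivAt_stream_y.deriv]

variable (hβs : 0 < βs) (hβb : 0 < βb)
include hβs hβb

lemma Dcoef_pos {s : ℝ} (hs : 0 ≤ s) : 0 < Dcoef βs βb s := by
  unfold Dcoef lamS lamB; positivity

lemma contDiffAt_coeffs {s : ℝ} (hs : 0 ≤ s) :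
    ContDiffAt ℝ 2 (aRed βs βb) s ∧ ContDiffAt ℝ 2 (bRed βs βb) s ∧
      ContDiffAt ℝ 2 (cCoef βs βb) s := by
  have hD := (Dcoef_pos hβs hβb hs).ne'
  unfold aRed bRed cCoef
  unfold Dcoef lamS lamB at *
  refine ⟨?_, ?_, ?_⟩ <;> fun_prop (disch := exact hD)

lemma exists_coeffs_absDerivsLE (M : ℝ) : ∃ K, 0 ≤ K ∧ ∀ s ∈ Set.Icc 0 M,
    AbsDerivsLE (aRed βs βb) K s ∧ AbsDerivsLE (bRed βs βb) K s ∧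
      AbsDerivsLE (cCoef βs βb) K s := by
  have hreg s (hs : s ∈ Set.Icc 0 M) := contDiffAt_coeffs hβs hβb hs.1
  obtain ⟨Ka, hKa⟩ := exists_absDerivsLE isCompact_Icc fun s hs => (hreg s hs).1
  obtain ⟨Kb, hKb⟩ := exists_absDerivsLE isCompact_Icc fun s hs => (hreg s hs).2.1
  obtain ⟨Kc, hKc⟩ := exists_absDerivsLE isCompact_Icc fun s hs => (hreg s hs).2.2
  refine ⟨max 0 (max Ka (max Kb Kc)), le_max_left _ _, fun s hs => ⟨?_, ?_, ?_⟩⟩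
  · exact (hKa s hs).mono (by simp)
  · exact (hKb s hs).mono (by simp)
  · exact (hKc s hs).mono (by simp)

variable {h : ℝ → ℝ → ℝ} {x y t : ℝ}

lemma phi2_eq (hpos : ∀ᶠ x' in 𝓝 x, 0 < h x' t)
    (hx : DifferentiableAt ℝ (fun x' => h x' t) x) :
    phi2 βs βb h x y t = streamS (aRed βs βb) (bRed βs βb) (cCoef βs βb) y (h x t) *
      deriv (fun x' => h x' t) x := by
  have hψ : (fun x' => psiF βs βb h x' y t) =ᶠ[𝓝 x]
      fun x' => stream (aRed βs βb) (bRed βs βb) (cCoef βs βb) y (h x' t) :=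
    hpos.mono fun _ hx' => psiF_eq_stream hx'.ne'
  have hs := hpos.self_of_nhds
  obtain ⟨hA, hB, hC⟩ := contDiffAt_coeffs hβs hβb hs.le
  rw [phi2, hψ.deriv_eq]
  exact ((hasDerivAt_stream (hA.differentiableAt (by norm_num)) (hB.differentiableAt (by norm_num))
    (hC.differentiableAt (by norm_num)) hs.ne').comp x hx.hasDerivAt).deriv

variable (hreg : ContDiff ℝ 2 fun p : ℝ × ℝ => h p.1 p.2)
include hreg

lemma hasDerivAt_phi1 (hs : 0 < h x t) :
    HasDerivAt (fun t' => phi1 βs βb h x y t')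
      (-(streamYS (aRed βs βb) (bRed βs βb) (cCoef βs βb) y (h x t) *
        deriv (fun t' => h x t') t)) t := by
  have ht : DifferentiableAt ℝ (fun t' => h x t') t :=
    (hasDerivAt_snd_slice (hreg.differentiable (by norm_num) (x, t))).differentiableAt
  have hφ : (fun t' => phi1 βs βb h x y t') =ᶠ[𝓝 t]
      fun t' => -streamY (aRed βs βb) (bRed βs βb) (cCoef βs βb) y (h x t') :=
    (ht.continuousAt.eventually (lt_mem_nhds hs)).mono fun _ ht' => phi1_eq ht'
  obtain ⟨hA, hB, hC⟩ := contDiffAt_coeffs hβs hβb hs.le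
  exact (((hasDerivAt_streamY (hA.differentiableAt (by norm_num))
    (hB.differentiableAt (by norm_num)) (hC.differentiableAt (by norm_num)) hs.ne').comp t
      ht.hasDerivAt).neg).congr_of_eventuallyEq hφ

lemma hasDerivAt_phi2 (hs : 0 < h x t) :
    HasDerivAt (fun t' => phi2 βs βb h x y t')
      (streamSS (aRed βs βb) (bRed βs βb) (cCoef βs βb) y (h x t) *
          deriv (fun t' => h x t') t * deriv (fun x' => h x' t) x +
        streamS (aRed βs βb) (bRed βs βb) (cCoef βs βb) y (h x t) *
          deriv (fun x' => deriv (fun t' => h x' t') t) x) t := by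
  have hdiff := hreg.differentiable (by norm_num)
  have ht : DifferentiableAt ℝ (fun t' => h x t') t :=
    (hasDerivAt_snd_slice (hdiff (x, t))).differentiableAt
  have hO : IsOpen {p : ℝ × ℝ | 0 < h p.1 p.2} := isOpen_lt continuous_const hreg.continuous
  have hpos : ∀ᶠ t' in 𝓝 t, ∀ᶠ x' in 𝓝 x, 0 < h x' t' := by
    filter_upwards [(continuous_const.prodMk continuous_id).continuousAt.preimage_mem_nhds
      (hO.mem_nhds hs)] with t' ht'
    exact (continuous_id.prodMk continuous_const).continuousAt.preimage_mem_nhds (hO.mem_nhds ht')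
  have hφ : (fun t' => phi2 βs βb h x y t') =ᶠ[𝓝 t] fun t' =>
      streamS (aRed βs βb) (bRed βs βb) (cCoef βs βb) y (h x t') * deriv (fun x' => h x' t') x :=
    hpos.mono fun t' ht' =>
      phi2_eq hβs hβb ht' (hasDerivAt_fst_slice (hdiff (x, t'))).differentiableAt
  obtain ⟨hA, hB, hC⟩ := contDiffAt_coeffs hβs hβb hs.le
  exact ((((hasDerivAt_streamS hA hB hC hs.ne').comp t ht.hasDerivAt).mul
    (hasDerivAt_deriv_comm hreg x t))).congr_of_eventuallyEq hφ

end TestField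

end

open TestField

theorem test_field_time_derivative_bounds_general
    (βs βb : ℝ) (hβs : 0 < βs) (hβb : 0 < βb)
    (L T M : ℝ)
    (h : ℝ → ℝ → ℝ)
    (hpos : ∀ x ∈ Set.Icc (0:ℝ) L, ∀ t ∈ Set.Icc (0:ℝ) T, 0 < h x t ∧ h x t ≤ M)
    (hreg : ContDiff ℝ 2 fun p : ℝ × ℝ => h p.1 p.2)
    (hdx : ∀ x ∈ Set.Icc (0:ℝ) L, ∀ t ∈ Set.Icc (0:ℝ) T,
      |deriv (fun x' => h x' t) x| ≤ M) :
    ∃ C > 0, ∀ t ∈ Set.Icc (0:ℝ) T, ∀ x ∈ Set.Icc (0:ℝ) L, ∀ y ∈ Set.Icc (0:ℝ) (h x t),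
      |deriv (fun t' => phi1 βs βb h x y t') t| ≤
        C * (1 + |deriv (fun t' => h x t') t|) ∧
      |deriv (fun t' => phi2 βs βb h x y t') t| ≤
        C * (|deriv (fun t' => h x t') t| *
              (|deriv (fun t' => h x t') t| +
                |deriv (fun x' => deriv (fun t' => h x' t') t) x|) +
            |deriv (fun t' => h x t') t| +
            |deriv (fun x' => deriv (fun t' => h x' t') t) x|) := by
  obtain ⟨K, hK, hcoeffs⟩ := exists_coeffs_absDerivsLE hβs hβb M
  set N := max 1 M
  have hN : 1 ≤ N := le_max_left _ _
  have hKN : K * N ^ 2 ≤ K * N ^ 3 :=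
    mul_le_mul_of_nonneg_left (pow_le_pow_right₀ hN (by norm_num)) hK
  have hKN₀ : 0 ≤ K * N ^ 3 := by positivity
  set C := 9 * K * N ^ 3 + 1 with hCdef
  refine ⟨C, by positivity, fun t ht x hx y hy => ?_⟩
  obtain ⟨hs, hsM⟩ := hpos x hx t ht
  obtain ⟨hA, hB, hC⟩ := hcoeffs (h x t) ⟨hs.le, hsM⟩
  have hsN : h x t ≤ N := hsM.trans (le_max_right _ _)
  have hxN : |deriv (fun x' => h x' t) x| ≤ N := (hdx x hx t ht).trans (le_max_right _ _)
  rw [(hasDerivAt_phi1 hβs hβb hreg hs).deriv, (hasDerivAt_phi2 hβs hβb hreg hs).deriv, abs_neg]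
  refine ⟨?_, (abs_add_le _ _).trans ?_⟩ <;> simp only [abs_mul]
  all_goals
    set a := |deriv (fun t' => h x t') t|
    set b := |deriv (fun x' => deriv (fun t' => h x' t') t) x|
    have ha : 0 ≤ a := abs_nonneg _
    have hb : 0 ≤ b := abs_nonneg _
  · calc _ ≤ 9 * K * N ^ 2 * a := by gcongr; exact abs_streamYS_le hA hB hC hs hy.1 hy.2 hsN hN
      _ ≤ C * (1 + a) := by nlinarith
  · calc _ ≤ 7 * K * N ^ 2 * a * N + 4 * K * N ^ 2 * b := by
          gcongr
          · exact abs_streamSS_le hA hB hC hs hy.1 hy.2 hsN hN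
          · exact abs_streamS_le hA hB hC hs hy.1 hy.2 hsN hN
      _ ≤ C * a + C * b := by
          nlinarith [mul_le_mul_of_nonneg_right hKN hb, mul_nonneg hKN₀ ha, mul_nonneg hKN₀ hb]
      _ ≤ C * (a * (a + b) + a + b) := by
          nlinarith [mul_nonneg (by positivity : 0 ≤ C) (mul_nonneg ha (add_nonneg ha hb))]

theorem test_field_time_derivative_bounds
    (βs βb : ℝ) (hβs : 0 < βs) (hβb : 0 < βb)
    (L T M : ℝ) (hL : 0 < L) (hT : 0 < T) (hM : 0 < M)
    (h : ℝ → ℝ → ℝ)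
    (hpos : ∀ x ∈ Set.Icc (0:ℝ) L, ∀ t ∈ Set.Icc (0:ℝ) T, 0 < h x t ∧ h x t ≤ M)
    (hreg : ContDiff ℝ 2 fun p : ℝ × ℝ => h p.1 p.2)
    (hdx : ∀ x ∈ Set.Icc (0:ℝ) L, ∀ t ∈ Set.Icc (0:ℝ) T,
      |deriv (fun x' => h x' t) x| ≤ M) :
    ∃ C > 0, ∀ t ∈ Set.Icc (0:ℝ) T, ∀ x ∈ Set.Icc (0:ℝ) L, ∀ y ∈ Set.Icc (0:ℝ) (h x t),
      |deriv (fun t' => phi1 βs βb h x y t') t| ≤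
        C * (1 + |deriv (fun t' => h x t') t|) ∧
      |deriv (fun t' => phi2 βs βb h x y t') t| ≤
        C * (|deriv (fun t' => h x t') t| *
              (|deriv (fun t' => h x t') t| +
                |deriv (fun x' => deriv (fun t' => h x' t') t) x|) +
            |deriv (fun t' => h x t') t| +
            |deriv (fun x' => deriv (fun t' => h x' t') t) x|) :=
  test_field_time_derivative_bounds_general βs βb hβs hβb L T M h hpos hreg hdx
end
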